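/- arXiv:math/0503179 — 2 statements merged into one kernel-verified Lean document; each statement's English description precedes it below -/
import Mathlib

section
/- If x₁, ..., x_k, z are positive integers with x₁ⁿ + x₂ⁿ + ... + x_kⁿ = zⁿ, and the numbers x₁ⁿ, ..., x_kⁿ, zⁿ are pairwise coprime (equivalently, setwise coprime as in the ABC-type hypothesis), and if the inequality zⁿ < rad(x₁ⁿ · x₂ⁿ · ... · x_kⁿ · zⁿ)² holds, then n < 2k + 2. -/
/-- Radical: product of the distinct prime factors. -/
def rad (m : ℕ) : ℕ := ∏ p ∈ m.primeFactors, p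

/-!
Each `xᵢ` is at most `z`, so the radical of `(x₁ ⋯ x_k z)ⁿ`, which is that of `x₁ ⋯ x_k z`,
is at most `z ^ (k + 1)`. The hypothesis then reads `zⁿ < z ^ (2k + 2)`, which forces
`z ≥ 2` and `n < 2k + 2`.
-/

theorem rad_pow (m : ℕ) {n : ℕ} (hn : n ≠ 0) : rad (m ^ n) = rad m := by
  rw [rad, rad, Nat.primeFactors_pow m hn]

theorem rad_le_of_le {m N : ℕ} (h : m ≤ N) (hN : 0 < N) : rad m ≤ N := by
  rcases Nat.eq_zero_or_pos m with rfl | hm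
  · rw [rad, Nat.primeFactors_zero, Finset.prod_empty]
    exact hN
  · exact (Nat.le_of_dvd hm (Nat.prod_primeFactors_dvd m)).trans h

theorem le_of_sum_pow_eq_pow {ι : Type*} [Fintype ι] {x : ι → ℕ} {z n : ℕ} (hn : n ≠ 0)
    (heq : ∑ i, x i ^ n = z ^ n) (i : ι) : x i ≤ z := by
  rw [← Nat.pow_le_pow_iff_left hn, ← heq]
  exact Finset.single_le_sum (fun j _ => Nat.zero_le (x j ^ n)) (Finset.mem_univ i)

theorem stmt_0_general (k n : ℕ) (x : Fin k → ℕ) (z : ℕ)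
    (hz : 0 < z)
    (heq : ∑ i, x i ^ n = z ^ n)
    (habc : z ^ n < rad ((∏ i, x i ^ n) * z ^ n) ^ 2) :
    n < 2 * k + 2 := by
  rcases Nat.eq_zero_or_pos n with rfl | hn
  · omega
  have hprod : (∏ i, x i) * z ≤ z ^ (k + 1) := by
    rw [pow_succ]
    gcongr
    simpa using Finset.prod_le_pow_card Finset.univ x z
      fun i _ => le_of_sum_pow_eq_pow hn.ne' heq i
  have hrad : rad ((∏ i, x i ^ n) * z ^ n) ≤ z ^ (k + 1) := by
    rw [Finset.prod_pow, ← mul_pow, rad_pow _ hn.ne']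
    exact rad_le_of_le hprod (pow_pos hz _)
  have hlt : z ^ n < z ^ (2 * k + 2) :=
    calc z ^ n < rad ((∏ i, x i ^ n) * z ^ n) ^ 2 := habc
      _ ≤ (z ^ (k + 1)) ^ 2 := Nat.pow_le_pow_left hrad 2
      _ = z ^ (2 * k + 2) := by ring
  have hz1 : 1 < z := by
    by_contra! h
    obtain rfl : z = 1 := by omega
    simp at hlt
  exact (Nat.pow_lt_pow_iff_right hz1).mp hlt

theorem stmt_0 (k n : ℕ) (x : Fin k → ℕ) (z : ℕ)
    (hx : ∀ i, 0 < x i) (hz : 0 < z)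
    (heq : ∑ i, x i ^ n = z ^ n)
    (hcop : (∀ i j, i ≠ j → Nat.Coprime (x i ^ n) (x j ^ n)) ∧
      ∀ i, Nat.Coprime (x i ^ n) (z ^ n))
    (habc : z ^ n < rad ((∏ i, x i ^ n) * z ^ n) ^ 2) :
    n < 2 * k + 2 :=
  stmt_0_general k n x z hz heq habc
end

section
/- Assume that for all coprime positive integers a₁, a₂, b with a₁ + a₂ = b one has b < rad(a₁·a₂·b)². Then for every n ≥ 6 there are no coprime positive integers x, y, z with xⁿ + yⁿ = zⁿ. -/
lemma rad_le (m : ℕ) (hm : 0 < m) : rad m ≤ m :=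
  Nat.le_of_dvd hm (Nat.prod_primeFactors_dvd m)

theorem stmt_12
    (habc : ∀ a₁ a₂ b : ℕ, 0 < a₁ → 0 < a₂ → 0 < b →
      Nat.Coprime a₁ a₂ → Nat.Coprime a₁ b → Nat.Coprime a₂ b →
      a₁ + a₂ = b → b < rad (a₁ * a₂ * b) ^ 2) :
    ∀ n : ℕ, 6 ≤ n →
      ¬ ∃ x y z : ℕ, 0 < x ∧ 0 < y ∧ 0 < z ∧
        Nat.Coprime x y ∧ Nat.Coprime x z ∧ Nat.Coprime y z ∧
        x ^ n + y ^ n = z ^ n := by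
  intro n hn ⟨x, y, z, hx, hy, hz, hxy, hxz, hyz, heq⟩
  have hn0 : n ≠ 0 := by omega
  have key := habc (x ^ n) (y ^ n) (z ^ n) (pow_pos hx n) (pow_pos hy n)
    (pow_pos hz n) (hxy.pow _ _) (hxz.pow _ _) (hyz.pow _ _) heq
  have hrw : x ^ n * y ^ n * z ^ n = (x * y * z) ^ n := by ring
  rw [hrw] at key
  have hradpow : rad ((x * y * z) ^ n) = rad (x * y * z) := by
    unfold rad
    rw [Nat.primeFactors_pow _ hn0]
  rw [hradpow] at key
  have hxz' : x ≤ z := by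
    have : x ^ n ≤ z ^ n := by omega
    exact (Nat.pow_le_pow_iff_left hn0).mp this
  have hyz' : y ≤ z := by
    have : y ^ n ≤ z ^ n := by omega
    exact (Nat.pow_le_pow_iff_left hn0).mp this
  have h1 : rad (x * y * z) ≤ z ^ 3 := by
    calc rad (x * y * z) ≤ x * y * z :=
          rad_le _ (by positivity)
      _ ≤ z * z * z := by
          exact Nat.mul_le_mul (Nat.mul_le_mul hxz' hyz') le_rfl
      _ = z ^ 3 := by ring
  have h2 : rad (x * y * z) ^ 2 ≤ z ^ 6 := by
    calc rad (x * y * z) ^ 2 ≤ (z ^ 3) ^ 2 := Nat.pow_le_pow_left h1 2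
      _ = z ^ 6 := by ring
  have h3 : z ^ 6 ≤ z ^ n := Nat.pow_le_pow_right hz hn
  omega
end
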